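/- arXiv:1902.06299 — 10 statements merged into one kernel-verified Lean document; each statement's English description precedes it below -/
import Mathlib

section
/- Let G : ℕ → ℕ be defined greedily by G(x) = mex({G(x') : x' < x} ∪ (Y_x ∩ ℕ)), where (Y_x) is a sequence of finite subsets of ℤ that is additively periodic with period p (Y_{x+p} = Y_x + p for all x). Then G is surjective, hence a permutation of ℕ. -/
/-!
A mex-greedy sequence is injective, since `G x` is chosen outside `{G x' : x' < x}`.
If some value `y` were never taken, then from the first `x` on where `y` is no longer
blocked by `Y x`, the greedy choice would always be some `G x < y`, so the injective
tail of `G` would map infinitely many arguments into `{0, …, y - 1}`. Additive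
periodicity guarantees that `y` is eventually unblocked: `Y x` lies above `m + x - p`,
where `m` is a lower bound of `Y 0, …, Y (p - 1)`.
-/

open Filter Set

def IsMexGreedy (G : ℕ → ℕ) (S : ℕ → Set ℕ) : Prop :=
  ∀ x, G x = sInf {n | (∀ x' < x, G x' ≠ n) ∧ n ∉ S x}

namespace IsMexGreedy

variable {G : ℕ → ℕ} {S : ℕ → Set ℕ}

theorem apply_le (hG : IsMexGreedy G S) {x y : ℕ} (hy : ∀ x' < x, G x' ≠ y) (hyS : y ∉ S x) :
    G x ≤ y :=
  hG x ▸ Nat.sInf_le ⟨hy, hyS⟩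

theorem apply_ne_of_lt (hG : IsMexGreedy G S) (hS : ∀ x, (S x).Finite) {x' x : ℕ}
    (hx : x' < x) : G x' ≠ G x := by
  obtain ⟨n, hn⟩ := (((finite_Iio x).image G).union (hS x)).infinite_compl.nonempty
  have hne : {n | (∀ x' < x, G x' ≠ n) ∧ n ∉ S x}.Nonempty := by
    simp only [mem_compl_iff, mem_union, mem_image, mem_Iio, not_or, not_exists, not_and] at hn
    exact ⟨n, hn.1, hn.2⟩
  exact (hG x ▸ Nat.sInf_mem hne).1 x' hx

theorem injective (hG : IsMexGreedy G S) (hS : ∀ x, (S x).Finite) : Function.Injective G :=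
  fun a b hab => by
    by_contra hne
    rcases Nat.lt_or_gt_of_ne hne with h | h
    · exact hG.apply_ne_of_lt hS h hab
    · exact hG.apply_ne_of_lt hS h hab.symm

theorem surjective (hG : IsMexGreedy G S) (hS : ∀ x, (S x).Finite)
    (hunblocked : ∀ y, ∀ᶠ x in atTop, y ∉ S x) : Function.Surjective G := by
  intro y
  by_contra! hy
  obtain ⟨N, hN⟩ := eventually_atTop.1 (hunblocked y)
  have htail : ∀ k, G (N + k) ∈ Iio y := fun k =>
    (hG.apply_le (fun x' _ => hy x') (hN _ (Nat.le_add_right N k))).lt_of_ne (hy _)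
  have hinj : Function.Injective fun k => G (N + k) :=
    fun a b hab => Nat.add_left_cancel (hG.injective hS hab)
  exact (finite_Iio y).not_infinite (infinite_of_injective_forall_mem hinj htail)

end IsMexGreedy

section Periodic

variable {Y : ℕ → Finset ℤ} {p : ℕ}

theorem exists_lowerBound_of_periodic (hp : 1 ≤ p)
    (hper : ∀ x : ℕ, Y (x + p) = (Y x).image (· + (p : ℤ))) :
    ∃ m : ℤ, ∀ x, ∀ z ∈ Y x, m + x < z + p := by
  obtain ⟨m, hm⟩ := ((Finset.range p).biUnion Y).bddBelow
  refine ⟨m, fun x => ?_⟩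
  induction x using Nat.strong_induction_on with
  | _ x ih =>
    intro z hz
    rcases lt_or_ge x p with hx | hx
    · have : m ≤ z := hm (Finset.mem_biUnion.2 ⟨x, Finset.mem_range.2 hx, hz⟩)
      omega
    · obtain ⟨w, hw, rfl⟩ : ∃ w ∈ Y (x - p), w + p = z := by
        rwa [← Finset.mem_image, ← hper, Nat.sub_add_cancel hx]
      have := ih (x - p) (by omega) w hw
      omega

theorem eventually_notMem_of_periodic (hp : 1 ≤ p)
    (hper : ∀ x : ℕ, Y (x + p) = (Y x).image (· + (p : ℤ))) (z : ℤ) :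
    ∀ᶠ x in atTop, z ∉ Y x := by
  obtain ⟨m, hm⟩ := exists_lowerBound_of_periodic hp hper
  refine eventually_atTop.2 ⟨(z + p - m).toNat, fun x hx hz => ?_⟩
  have := hm x z hz
  omega

end Periodic

/-- the greedy (mex) sequence over an additively periodic
sequence of finite sets is surjective, hence a permutation of ℕ. -/
theorem nim_sequence_bijective
    (Y : ℕ → Finset ℤ) (p : ℕ) (hp : 1 ≤ p)
    (hper : ∀ x : ℕ, Y (x + p) = (Y x).image (· + (p : ℤ)))
    (G : ℕ → ℕ)
    (hG : ∀ x : ℕ, G x = sInf {n : ℕ | (∀ x' < x, G x' ≠ n) ∧ (n : ℤ) ∉ Y x}) :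
    Function.Surjective G ∧ Function.Bijective G := by
  have hmex : IsMexGreedy G fun x => (Nat.cast : ℕ → ℤ) ⁻¹' Y x := hG
  have hfin : ∀ x, ((Nat.cast : ℕ → ℤ) ⁻¹' Y x).Finite := fun x =>
    (Y x).finite_toSet.preimage Nat.cast_injective.injOn
  have hsurj := hmex.surjective hfin fun y => eventually_notMem_of_periodic hp hper y
  exact ⟨hsurj, hmex.injective hfin, hsurj⟩
end

section
/- Let (Y_x) be additively periodic finite subsets of ℤ with period p ≥ 1, and suppose every element of Y_x − x is at most Mo − 1 for some Mo ≥ 1. Let G(x) = mex({G(x') : x' < x} ∪ (Y_x ∩ ℕ)). Then there exists C ∈ ℕ such that for all x ≥ C, G(x) − x ≤ max(0, Mo), i.e. G(x) ≤ x + max(0, Mo). -/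
/-- if every element of `Y x - x` is at most `Mo - 1`, then the
difference function of the greedy sequence is eventually bounded above by `max 0 Mo`. -/
theorem difference_eventually_bounded_above
    (Y : ℕ → Finset ℤ) (p : ℕ) (hp : 1 ≤ p)
    (hper : ∀ x : ℕ, Y (x + p) = (Y x).image (· + (p : ℤ)))
    (Mo : ℤ) (hMo : 1 ≤ Mo)
    (hbound : ∀ x : ℕ, ∀ y ∈ Y x, y - (x : ℤ) ≤ Mo - 1)
    (G : ℕ → ℕ)
    (hG : ∀ x : ℕ, G x = sInf {n : ℕ | (∀ x' < x, G x' ≠ n) ∧ (n : ℤ) ∉ Y x}) :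
    ∃ C : ℕ, ∀ x : ℕ, C ≤ x → (G x : ℤ) - (x : ℤ) ≤ max 0 Mo := by
  have key : ∀ x : ℕ, (G x : ℤ) ≤ (x : ℤ) + Mo := by
    intro x
    induction x using Nat.strong_induction_on with
    | _ x ih =>
      by_contra h
      push_neg at h
      set m := Mo.toNat with hmdef
      have hm : (m : ℤ) = Mo := Int.toNat_of_nonneg (by linarith)
      have hlt : x + m < G x := by
        have : ((x + m : ℕ) : ℤ) < (G x : ℤ) := by push_cast; rw [hm]; linarith
        exact_mod_cast this
      have hnot : (x + m) ∉ {n : ℕ | (∀ x' < x, G x' ≠ n) ∧ (n : ℤ) ∉ Y x} := by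
        apply Nat.notMem_of_lt_sInf
        rw [← hG]; exact hlt
      simp only [Set.mem_setOf_eq, not_and_or, not_forall, not_not] at hnot
      rcases hnot with ⟨x', hx', hGx'⟩ | hmem
      · have hle := ih x' hx'
        rw [hGx'] at hle
        push_cast at hle
        rw [hm] at hle
        have : (x' : ℤ) < x := by exact_mod_cast hx'
        linarith
      · have := hbound x _ hmem
        push_cast at this
        rw [hm] at this
        linarith
  exact ⟨0, fun x _ => by have := key x; have h0 : Mo ≤ max 0 Mo := le_max_right _ _; linarith⟩
end

section
/- Let (Y_x) be additively periodic finite subsets of ℤ with period p ≥ 1, and suppose every element of Y_x − x is at least Mu + 1 for some Mu ≤ −1. Let G(x) = mex({G(x') : x' < x} ∪ (Y_x ∩ ℕ)). Then for all x ∈ ℕ, G(x) − x ≥ min(0, Mu), i.e. G(x) ≥ x + Mu. -/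
/-- if every element of `Y x - x` is at least `Mu + 1`, then the
difference function of the greedy sequence is bounded below by `min 0 Mu` everywhere. -/
theorem difference_bounded_below
    (Y : ℕ → Finset ℤ) (p : ℕ) (hp : 1 ≤ p)
    (hper : ∀ x : ℕ, Y (x + p) = (Y x).image (· + (p : ℤ)))
    (Mu : ℤ) (hMu : Mu ≤ -1)
    (hbound : ∀ x : ℕ, ∀ y ∈ Y x, Mu + 1 ≤ y - (x : ℤ))
    (G : ℕ → ℕ)
    (hG : ∀ x : ℕ, G x = sInf {n : ℕ | (∀ x' < x, G x' ≠ n) ∧ (n : ℤ) ∉ Y x}) :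
    ∀ x : ℕ, min 0 Mu ≤ (G x : ℤ) - (x : ℤ) := by
  -- the sets are nonempty
  have hne : ∀ x : ℕ, {n : ℕ | (∀ x' < x, G x' ≠ n) ∧ (n : ℤ) ∉ Y x}.Nonempty := by
    intro x
    set B : Finset ℕ := (Finset.range x).image G ∪ (Y x).image Int.toNat with hB
    refine ⟨B.sup id + 1, ?_, ?_⟩
    · intro x' hx' h
      have : G x' ∈ B := Finset.mem_union_left _
        (Finset.mem_image.2 ⟨x', Finset.mem_range.2 hx', rfl⟩)
      have := Finset.le_sup (f := id) this
      simp only [id_eq] at this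
      omega
    · intro hmem
      have : (B.sup id + 1) ∈ B := Finset.mem_union_right _
        (Finset.mem_image.2 ⟨_, hmem, by simp⟩)
      have := Finset.le_sup (f := id) this
      simp only [id_eq] at this
      omega
  have hmemS : ∀ x : ℕ,
      (∀ x' < x, G x' ≠ G x) ∧ ((G x : ℤ)) ∉ Y x := by
    intro x
    have := Nat.sInf_mem (hne x)
    rw [← hG x] at this
    exact this
  have hmin : ∀ x : ℕ, ∀ m : ℕ, m < G x →
      ¬ ((∀ x' < x, G x' ≠ m) ∧ (m : ℤ) ∉ Y x) := by
    intro x m hm hmem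
    have : sInf {n : ℕ | (∀ x' < x, G x' ≠ n) ∧ (n : ℤ) ∉ Y x} ≤ m :=
      Nat.sInf_le hmem
    rw [← hG x] at this
    omega
  -- main claim by strong induction
  have main : ∀ x : ℕ, (x : ℤ) + Mu ≤ (G x : ℤ) := by
    intro x
    induction x using Nat.strong_induction_on with
    | _ x ih =>
      by_contra hcon
      push_neg at hcon
      -- set x0 = G x - Mu
      have hv : (0 : ℤ) ≤ (G x : ℤ) - Mu := by
        have : (0:ℤ) ≤ (G x : ℤ) := Int.ofNat_nonneg _
        omega
      set x0 : ℕ := ((G x : ℤ) - Mu).toNat with hx0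
      have hx0c : (x0 : ℤ) = (G x : ℤ) - Mu := Int.toNat_of_nonneg hv
      have hx0lt : x0 < x := by
        have : (x0 : ℤ) < (x : ℤ) := by omega
        exact_mod_cast this
      have hih : (x0 : ℤ) + Mu ≤ (G x0 : ℤ) := ih x0 hx0lt
      have hGx_le : (G x : ℤ) ≤ (G x0 : ℤ) := by omega
      rcases eq_or_lt_of_le hGx_le with heq | hlt
      · exact (hmemS x).1 x0 hx0lt (by exact_mod_cast heq.symm)
      · have hltn : G x < G x0 := by exact_mod_cast hlt
        have := hmin x0 (G x) hltn
        rw [not_and_or] at this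
        rcases this with h | h
        · push_neg at h
          obtain ⟨x', hx', hx'eq⟩ := h
          exact (hmemS x).1 x' (lt_trans hx' hx0lt) hx'eq
        · rw [not_not] at h
          have := hbound x0 _ h
          omega
  intro x
  have := main x
  have : min 0 Mu = Mu := min_eq_right (by omega)
  omega
end

section
/- Let (Y_x) be additively periodic finite subsets of ℤ with period p, with Mu + 1 ≤ y − x ≤ Mo − 1 for all y ∈ Y_x, where Mu ≤ 0 ≤ Mo. Let G(x) = mex({G(x') : x' < x} ∪ (Y_x ∩ ℕ)). If Mo ≤ 0, then G is eventually the identity: there exists L ∈ ℕ such that G(x) = x for all x ≥ L, so G is additively periodic with period length 1. -/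
/-- degenerate case: if `Mo ≤ 0`, the greedy sequence is eventually
the identity, hence additively periodic with period length 1. -/
theorem degenerate_case_identity
    (Y : ℕ → Finset ℤ) (p : ℕ) (hp : 1 ≤ p)
    (hper : ∀ x : ℕ, Y (x + p) = (Y x).image (· + (p : ℤ)))
    (Mu Mo : ℤ) (hMu : Mu ≤ 0) (hMo : 0 ≤ Mo)
    (hbound : ∀ x : ℕ, ∀ y ∈ Y x, Mu + 1 ≤ y - (x : ℤ) ∧ y - (x : ℤ) ≤ Mo - 1)
    (G : ℕ → ℕ)
    (hG : ∀ x : ℕ, G x = sInf {n : ℕ | (∀ x' < x, G x' ≠ n) ∧ (n : ℤ) ∉ Y x})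
    (hMo0 : Mo ≤ 0) :
    ∃ L : ℕ, ∀ x : ℕ, L ≤ x → G x = x := by
  refine ⟨0, fun x _ => ?_⟩
  induction x using Nat.strong_induction_on with
  | _ x ih =>
    rw [hG x]
    have hset : {n : ℕ | (∀ x' < x, G x' ≠ n) ∧ (n : ℤ) ∉ Y x} = {n : ℕ | x ≤ n} := by
      ext n
      simp only [Set.mem_setOf_eq]
      constructor
      · rintro ⟨h1, _⟩
        by_contra h
        exact h1 n (Nat.lt_of_not_le h) (ih n (Nat.lt_of_not_le h) (Nat.zero_le n))
      · intro hxn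
        refine ⟨fun x' hx' => by rw [ih x' hx' (Nat.zero_le _)]; omega, fun hmem => ?_⟩
        have := (hbound x n hmem).2
        omega
    rw [hset]
    have : sInf {n : ℕ | x ≤ n} = x := by
      apply le_antisymm
      · exact csInf_le (OrderBot.bddBelow _) (le_refl x)
      · exact le_csInf ⟨x, le_refl x⟩ fun b hb => hb
    exact this
end

section
/- Exclusion Lemma: Let G : ℕ → ℕ be defined by G(x) = mex({G(x') : x' < x} ∪ (Y_x ∩ ℕ)) where (Y_x) is additively periodic with period p. Suppose x < y with G(x) > G(y) (an inversion). Then G(y) ∈ Y_x, and consequently for every a ∈ ℤ with x + ap ≥ 0, we have G(x + ap) − (x + ap) ≠ G(y) − x. -/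
/-- Exclusion Lemma: from an inversion `x < y`, `G x > G y` of the
greedy sequence it follows that `G y ∈ Y x`, and the difference value `G y - x`
is excluded at the index `x` modulo `p`. -/
theorem exclusion_lemma
    (Y : ℕ → Finset ℤ) (p : ℕ) (hp : 1 ≤ p)
    (hper : ∀ x : ℕ, Y (x + p) = (Y x).image (· + (p : ℤ)))
    (G : ℕ → ℕ)
    (hG : ∀ x : ℕ, G x = sInf {n : ℕ | (∀ x' < x, G x' ≠ n) ∧ (n : ℤ) ∉ Y x})
    (x y : ℕ) (hxy : x < y) (hinv : G y < G x) :
    (G y : ℤ) ∈ Y x ∧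
      ∀ a : ℤ, ∀ z : ℕ, (z : ℤ) = (x : ℤ) + a * (p : ℤ) →
        (G z : ℤ) - (z : ℤ) ≠ (G y : ℤ) - (x : ℤ) := by
  have hmem : ∀ w : ℕ, (∀ x' < w, G x' ≠ G w) ∧ ((G w : ℤ)) ∉ Y w := by
    intro w
    have hne : {n : ℕ | (∀ x' < w, G x' ≠ n) ∧ (n : ℤ) ∉ Y w}.Nonempty := by
      obtain ⟨n, hn⟩ := Infinite.exists_notMem_finset
        ((Finset.range w).image G ∪ (Y w).image Int.toNat)
      refine ⟨n, ?_, ?_⟩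
      · intro x' hx' h
        exact hn (Finset.mem_union_left _
          (Finset.mem_image.mpr ⟨x', Finset.mem_range.mpr hx', h⟩))
      · intro h
        exact hn (Finset.mem_union_right _
          (Finset.mem_image.mpr ⟨(n : ℤ), h, Int.toNat_natCast n⟩))
    have h := Nat.sInf_mem hne
    rw [← hG w] at h
    exact h
  have hnat : ∀ u b : ℕ, Y (u + b * p) = (Y u).image (· + ((b * p : ℕ) : ℤ)) := by
    intro u b
    induction b with
    | zero => simp
    | succ b ih =>
      have h1 : u + (b + 1) * p = (u + b * p) + p := by ring
      rw [h1, hper, ih, Finset.image_image]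
      apply Finset.image_congr
      intro c _
      push_cast
      simp
      ring
  have hshift : ∀ (a : ℤ) (z : ℕ), (z : ℤ) = x + a * p →
      ∀ m : ℤ, m ∈ Y x → m + a * p ∈ Y z := by
    intro a z hz m hm
    rcases le_or_gt 0 a with ha | ha
    · lift a to ℕ using ha with b hb
      have hz' : z = x + b * p := by exact_mod_cast hz
      subst hz'
      rw [hnat]
      exact Finset.mem_image.mpr ⟨m, hm, by push_cast; ring⟩
    · set b : ℕ := (-a).toNat with hbdef
      have hb : (b : ℤ) = -a := Int.toNat_of_nonneg (by omega)
      have hx' : x = z + b * p := by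
        have : (x : ℤ) = (z : ℤ) + (b : ℤ) * p := by rw [hz, hb]; ring
        exact_mod_cast this
      rw [hx', hnat] at hm
      obtain ⟨c, hc, hcm⟩ := Finset.mem_image.mp hm
      have : m + a * p = c := by
        have hb' : ((b * p : ℕ) : ℤ) = (b : ℤ) * p := by push_cast; ring
        rw [← hcm]
        rw [hb'] at *
        have : (b : ℤ) * p = -a * p := by rw [hb]
        omega
      rw [this]
      exact hc
  have h1 : (G y : ℤ) ∈ Y x := by
    by_contra hmem'
    have hGy : G y ∈ {n : ℕ | (∀ x' < x, G x' ≠ n) ∧ (n : ℤ) ∉ Y x} := by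
      refine ⟨?_, hmem'⟩
      intro x' hx' h
      exact (hmem y).1 x' (hx'.trans hxy) h
    have : G x ≤ G y := by rw [hG x]; exact Nat.sInf_le hGy
    omega
  refine ⟨h1, ?_⟩
  intro a z hz heq
  have hGz : (G z : ℤ) = (G y : ℤ) + a * p := by omega
  have h2 := hshift a z hz (G y) h1
  rw [← hGz] at h2
  exact (hmem z).2 h2
end

section
/- Pigeonhole periodicity: Let f : ℕ → F where F is a finite set. Then there exist r < r' ≤ #F such that f(r) = f(r'). Consequently, if G : ℕ → ℕ is a Nim sequence over an additively periodic (Y_x) with period p and difference bounds Mu, Mo, associating to each r ∈ ℕ the pair of difference-translated cut sets (d(S_{x+rp}), d(T_{x+rp})), which takes at most C(|Mu|+Mo, min(|Mu|, Mo)) values, then G is additively periodic with period length at most C(|Mu|+Mo, min(|Mu|, Mo)) · p. -/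
/-!
Write `A = |Mu|`, `B = Mo`. Eventually every value below `x - A` occurs before time `x`, and no
value at or above `x + B` does: in both cases a nonincreasing excess in `ℕ` stabilises, and a
positive limit would make `G` an eventual shift `x ↦ x ± c`, impossible for a bijection. From then
on the values occurring before `x` are determined by which `A` of the `A + B` values in
`[x - A, x + B)` occur, and this window together with `Y x` determines `G x` and the next window.
By pigeonhole two of the times `t + r * p`, `r ≤ C(A + B, A)`, carry the same window, and since `Y`
is additively periodic along multiples of `p`, `G` repeats additively from there on.
-/

open Finset Function

theorem exists_lt_le_card_eq_of_mapsTo {α : Type*} {s : Finset α} (f : ℕ → α)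
    (hf : ∀ r ≤ #s, f r ∈ s) : ∃ r r', r < r' ∧ r' ≤ #s ∧ f r = f r' := by
  obtain ⟨a, ha, b, hb, hab, hfab⟩ := exists_ne_map_eq_of_card_lt_of_maps_to
    (s := range (#s + 1)) (by simp) fun r hr => hf r (Nat.lt_succ_iff.1 (mem_range.1 hr))
  rw [mem_range] at ha hb
  rcases hab.lt_or_gt with h | h
  · exact ⟨a, b, h, by omega, hfab⟩
  · exact ⟨b, a, h, by omega, hfab.symm⟩

section Shift

variable {G : ℕ → ℕ} {t c : ℕ}

theorem eq_zero_of_injective_of_add_eq (hG : Injective G) (h : ∀ x ≥ t, G x + c = x) :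
    c = 0 := by
  have hmaps : Set.MapsTo G (range t) (range (t - c)) := by
    intro a ha
    rw [coe_range, Set.mem_Iio] at ha
    rw [coe_range, Set.mem_Iio]
    by_contra hle
    have hback : G (G a + c) = G a := by have := h (G a + c) (by omega); omega
    have := hG hback
    omega
  have hcard := card_le_card_of_injOn G hmaps hG.injOn
  have := h t le_rfl
  simp only [card_range] at hcard
  omega

theorem eq_zero_of_surjective_of_eq_add (hG : Surjective G) (h : ∀ x ≥ t, G x = x + c) :
    c = 0 := by
  have hsub : range (t + c) ⊆ (range t).image G := by
    intro n hn
    obtain ⟨b, rfl⟩ := hG n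
    have hb : b < t := by
      by_contra hb
      have := h b (by omega)
      simp only [mem_range] at hn
      omega
    exact mem_image_of_mem G (mem_range.2 hb)
  have := (card_le_card hsub).trans card_image_le
  simp only [card_range] at this
  omega

end Shift

theorem exists_forall_ge_eq_of_succ_le {e : ℕ → ℕ} {L : ℕ} (he : ∀ x ≥ L, e (x + 1) ≤ e x) :
    ∃ t ≥ L, ∀ x ≥ t, e x = e t := by
  have hanti : Antitone fun n => e (L + n) :=
    antitone_nat_of_succ_le fun n => he (L + n) (by omega)
  obtain ⟨n, hn⟩ := WellFoundedGT.monotone_chain_condition' (α := ℕᵒᵈ) ⟨_, hanti.dual_right⟩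
  refine ⟨L + n, by omega, fun x hx => ?_⟩
  have hle := hn (x - L) (by omega)
  simp only [OrderHom.coe_mk, Function.comp_apply, OrderDual.toDual_lt_toDual, not_lt,
    Nat.add_sub_cancel' (show L ≤ x by omega)] at hle
  have hge := hanti (show n ≤ x - L by omega)
  simp only [Nat.add_sub_cancel' (show L ≤ x by omega)] at hge
  exact le_antisymm hge hle

def IsNimSequence (Y : ℕ → Finset ℤ) (L : ℕ) (G : ℕ → ℕ) : Prop :=
  ∀ x, L ≤ x → G x = sInf {n : ℕ | (∀ x' < x, G x' ≠ n) ∧ (n : ℤ) ∉ Y x}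

noncomputable def leastUntaken (G : ℕ → ℕ) (x : ℕ) : ℕ := sInf {n | ∀ a < x, G a ≠ n}

def takenSup (G : ℕ → ℕ) (x : ℕ) : ℕ := (range x).sup fun a => G a + 1

section Windows

variable {Y : ℕ → Finset ℤ} {L : ℕ} {G : ℕ → ℕ} {A B x : ℕ}

theorem IsNimSequence.isLeast (hG : IsNimSequence Y L G) (hx : L ≤ x) :
    IsLeast {n : ℕ | (∀ a < x, G a ≠ n) ∧ (n : ℤ) ∉ Y x} (G x) := by
  rw [hG x hx]
  apply isLeast_csInf
  obtain ⟨n, hn⟩ := Infinite.exists_notMem_finset ((range x).image G ∪ (Y x).image Int.toNat)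
  refine ⟨n, fun a ha hGa => hn ?_, fun hY => hn ?_⟩
  · exact mem_union_left _ (mem_image.2 ⟨a, mem_range.2 ha, hGa⟩)
  · exact mem_union_right _ (mem_image.2 ⟨n, hY, Int.toNat_natCast n⟩)

theorem isLeast_leastUntaken (G : ℕ → ℕ) (x : ℕ) :
    IsLeast {n | ∀ a < x, G a ≠ n} (leastUntaken G x) := by
  apply isLeast_csInf
  obtain ⟨n, hn⟩ := Infinite.exists_notMem_finset ((range x).image G)
  exact ⟨n, fun a ha hGa => hn (mem_image.2 ⟨a, mem_range.2 ha, hGa⟩)⟩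

theorem exists_eq_of_lt_leastUntaken {n : ℕ} (hn : n < leastUntaken G x) : ∃ a < x, G a = n := by
  by_contra! h
  exact (isLeast_leastUntaken G x).2 h |>.not_gt hn

theorem leastUntaken_le_succ : leastUntaken G x ≤ leastUntaken G (x + 1) :=
  (isLeast_leastUntaken G x).2 fun a ha => (isLeast_leastUntaken G (x + 1)).1 a (by omega)

theorem leastUntaken_lt_succ (h : G x = leastUntaken G x) :
    leastUntaken G x < leastUntaken G (x + 1) :=
  leastUntaken_le_succ.lt_of_ne fun he =>
    (isLeast_leastUntaken G (x + 1)).1 x (by omega) (h.trans he)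

theorem IsNimSequence.eq_leastUntaken (hG : IsNimSequence Y L G)
    (hYlow : ∀ x, ∀ y ∈ Y x, (x : ℤ) < y + A) (hx : L ≤ x) (h : leastUntaken G x + A ≤ x) :
    G x = leastUntaken G x := by
  refine (hG.isLeast hx).unique ⟨⟨(isLeast_leastUntaken G x).1, fun hY => ?_⟩, fun n hn => ?_⟩
  · have := hYlow x _ hY
    omega
  · exact (isLeast_leastUntaken G x).2 hn.1

theorem IsNimSequence.exists_forall_ge_le_leastUntaken (hG : IsNimSequence Y L G)
    (hinj : Injective G) (hYlow : ∀ x, ∀ y ∈ Y x, (x : ℤ) < y + A) :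
    ∃ t, ∀ x ≥ t, x ≤ leastUntaken G x + A := by
  obtain ⟨t, htL, ht⟩ := exists_forall_ge_eq_of_succ_le (e := fun x => x - (leastUntaken G x + A))
    (L := L) fun x hx => by
      have := leastUntaken_le_succ (G := G) (x := x)
      by_cases h : leastUntaken G x + A ≤ x
      · have := leastUntaken_lt_succ (hG.eq_leastUntaken hYlow hx h)
        omega
      · omega
  refine ⟨t, fun x hx => ?_⟩
  by_contra hlt
  -- the excess stays positive, so `G` agrees with `leastUntaken G` and lags `x` by a constant
  have hshift : ∀ y ≥ t, G y + (A + (t - (leastUntaken G t + A))) = y := fun y hy => by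
    have hy' := ht y hy
    have hx' := ht x hx
    rw [hG.eq_leastUntaken hYlow (by omega) (by omega)]
    omega
  have := eq_zero_of_injective_of_add_eq hinj hshift
  have := ht x hx
  omega

theorem lt_takenSup {a : ℕ} (ha : a < x) : G a < takenSup G x :=
  Nat.lt_of_succ_le (le_sup (f := fun a => G a + 1) (mem_range.2 ha))

theorem takenSup_succ : takenSup G (x + 1) = max (takenSup G x) (G x + 1) := by
  simp only [takenSup, range_add_one, sup_insert, max_comm]

theorem IsNimSequence.le_max_takenSup (hG : IsNimSequence Y L G)
    (hYup : ∀ x, ∀ y ∈ Y x, y < x + B) (hx : L ≤ x) : G x ≤ max (takenSup G x) (x + B) := by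
  by_contra! h
  -- `G x - 1` is neither taken nor in `Y x`, contradicting minimality of `G x`
  have hmem : G x - 1 ∈ {n : ℕ | (∀ a < x, G a ≠ n) ∧ (n : ℤ) ∉ Y x} := by
    refine ⟨fun a ha hGa => ?_, fun hY => ?_⟩
    · have := lt_takenSup (G := G) ha
      omega
    · have := hYup x _ hY
      omega
  have := (hG.isLeast hx).2 hmem
  omega

theorem IsNimSequence.exists_forall_ge_takenSup_le (hG : IsNimSequence Y L G)
    (hsurj : Surjective G) (hYup : ∀ x, ∀ y ∈ Y x, y < x + B) :
    ∃ t, ∀ x ≥ t, takenSup G x ≤ x + B := by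
  obtain ⟨t, htL, ht⟩ := exists_forall_ge_eq_of_succ_le (e := fun x => takenSup G x - (x + B))
    (L := L) fun x hx => by
      have := hG.le_max_takenSup hYup hx
      have := takenSup_succ (G := G) (x := x)
      omega
  refine ⟨t, fun x hx => ?_⟩
  by_contra hlt
  -- the excess stays positive, so `takenSup G` can only grow by one each step through `G y` itself
  have hshift : ∀ y ≥ t, G y = y + (B + (takenSup G t - (t + B))) := fun y hy => by
    have := ht y hy
    have := ht (y + 1) (by omega)
    have := ht x hx
    have := takenSup_succ (G := G) (x := y)
    have := hG.le_max_takenSup hYup (show L ≤ y by omega)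
    omega
  have := eq_zero_of_surjective_of_eq_add hsurj hshift
  have := ht x hx
  omega

end Windows

structure IsSettled (G : ℕ → ℕ) (A B x : ℕ) : Prop where
  le : A ≤ x
  exists_eq : ∀ n, n + A < x → ∃ a < x, G a = n
  lt : ∀ a < x, G a < x + B

/-- `j ∈ takenWindow G A x` iff the value `x + j - A` occurs before `x`. At settled times this
`A`-subset of `range (A + B)` encodes the paper's pair `(d(S_x), d(T_x))`. -/
def takenWindow (G : ℕ → ℕ) (A x : ℕ) : Finset ℕ :=
  ((range x).filter fun a => x ≤ G a + A).image fun a => G a + A - x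

section Settled

variable {Y : ℕ → Finset ℤ} {L : ℕ} {G : ℕ → ℕ} {A B x : ℕ}

theorem IsNimSequence.exists_forall_ge_isSettled (hG : IsNimSequence Y L G) (hbij : Bijective G)
    (hYlow : ∀ x, ∀ y ∈ Y x, (x : ℤ) < y + A) (hYup : ∀ x, ∀ y ∈ Y x, y < x + B) :
    ∃ t ≥ L, ∀ x ≥ t, IsSettled G A B x := by
  obtain ⟨t₁, ht₁⟩ := hG.exists_forall_ge_le_leastUntaken hbij.1 hYlow
  obtain ⟨t₂, ht₂⟩ := hG.exists_forall_ge_takenSup_le hbij.2 hYup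
  refine ⟨max L (max A (max t₁ t₂)), le_max_left _ _, fun x hx => ⟨by omega, fun n hn => ?_,
    fun a ha => ?_⟩⟩
  · exact exists_eq_of_lt_leastUntaken (by have := ht₁ x (by omega); omega)
  · exact (lt_takenSup ha).trans_le (ht₂ x (by omega))

theorem mem_takenWindow {j : ℕ} : j ∈ takenWindow G A x ↔ ∃ a < x, G a + A = x + j := by
  simp only [takenWindow, mem_image, mem_filter, mem_range]
  constructor
  · rintro ⟨a, ⟨ha, hle⟩, rfl⟩
    exact ⟨a, ha, by omega⟩
  · rintro ⟨a, ha, h⟩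
    exact ⟨a, ⟨ha, by omega⟩, by omega⟩

theorem mem_takenWindow_succ {j : ℕ} :
    j ∈ takenWindow G A (x + 1) ↔ j + 1 ∈ takenWindow G A x ∨ G x + A = x + 1 + j := by
  simp only [mem_takenWindow, Nat.lt_succ_iff_lt_or_eq, or_and_right, exists_or, exists_eq_left]
  constructor <;> rintro (⟨a, ha, h⟩ | h) <;> first | exact .inr h | exact .inl ⟨a, ha, by omega⟩

theorem IsSettled.takenWindow_subset (hs : IsSettled G A B x) :
    takenWindow G A x ⊆ range (A + B) := by
  intro j hj
  obtain ⟨a, ha, h⟩ := mem_takenWindow.1 hj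
  have := hs.lt a ha
  rw [mem_range]
  omega

theorem IsSettled.card_takenWindow (hs : IsSettled G A B x) (hinj : Injective G) :
    #(takenWindow G A x) = A := by
  have hbelow : ((range x).filter fun a => ¬ x ≤ G a + A).image G = range (x - A) := by
    ext n
    simp only [mem_image, mem_filter, mem_range]
    constructor
    · rintro ⟨a, ⟨-, h⟩, rfl⟩
      omega
    · intro hn
      obtain ⟨a, ha, rfl⟩ := hs.exists_eq n (by have := hs.le; omega)
      exact ⟨a, ⟨ha, by omega⟩, rfl⟩
  have hcard_below : #((range x).filter fun a => ¬ x ≤ G a + A) = x - A := by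
    rw [← card_image_of_injective _ hinj, hbelow, card_range]
  have hsplit := card_filter_add_card_filter_not (s := range x) fun a => x ≤ G a + A
  rw [takenWindow, card_image_of_injOn fun a ha b hb h => hinj (by
    simp only [coe_filter, mem_range, Set.mem_ofPred_eq] at ha hb h
    omega)]
  have := hs.le
  rw [card_range] at hsplit
  omega

theorem IsSettled.isLeast_takenWindow (hG : IsNimSequence Y L G) (hs : IsSettled G A B x)
    (hx : L ≤ x) :
    x ≤ G x + A ∧
      IsLeast {j : ℕ | j ∉ takenWindow G A x ∧ (x + j - A : ℤ) ∉ Y x} (G x + A - x) := by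
  obtain ⟨⟨hfree, hY⟩, hleast⟩ := hG.isLeast hx
  have hle : x ≤ G x + A := by
    by_contra! h
    obtain ⟨a, ha, hGa⟩ := hs.exists_eq (G x) h
    exact hfree a ha hGa
  refine ⟨hle, ⟨fun hj => ?_, ?_⟩, fun j ⟨hjW, hjY⟩ => ?_⟩
  · obtain ⟨a, ha, h⟩ := mem_takenWindow.1 hj
    exact hfree a ha (by omega)
  · rwa [show (x + (G x + A - x : ℕ) - A : ℤ) = G x by omega]
  · have := hs.le
    by_contra! hj
    have := hleast (a := x + j - A) ⟨fun a ha h => hjW (mem_takenWindow.2 ⟨a, ha, by omega⟩),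
      fun h => hjY (by rwa [show ((x + j - A : ℕ) : ℤ) = x + j - A by omega] at h)⟩
    omega

theorem IsSettled.add_eq_of_takenWindow_eq (hG : IsNimSequence Y L G) {q : ℕ}
    (hY : ∀ z, z ∈ Y x ↔ z + q ∈ Y (x + q)) (hx : L ≤ x) (hs : IsSettled G A B x)
    (hsq : IsSettled G A B (x + q)) (hW : takenWindow G A x = takenWindow G A (x + q)) :
    G (x + q) = G x + q := by
  obtain ⟨hle, hleast⟩ := hs.isLeast_takenWindow hG hx
  obtain ⟨hleq, hleastq⟩ := hsq.isLeast_takenWindow hG (by omega)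
  have hset : {j : ℕ | j ∉ takenWindow G A (x + q) ∧ ((x + q : ℕ) + j - A : ℤ) ∉ Y (x + q)} =
      {j : ℕ | j ∉ takenWindow G A x ∧ (x + j - A : ℤ) ∉ Y x} := by
    ext j
    rw [Set.mem_ofPred_eq, Set.mem_ofPred_eq, hW, hY,
      show (x + j - A : ℤ) + q = (x + q : ℕ) + j - A by push_cast; ring]
  rw [hset] at hleastq
  have := hleast.unique hleastq
  omega

theorem IsNimSequence.add_eq_of_takenWindow_eq (hG : IsNimSequence Y L G) {q x₀ : ℕ}
    (hY : ∀ x z, z ∈ Y x ↔ z + q ∈ Y (x + q)) (hset : ∀ x ≥ x₀, L ≤ x ∧ IsSettled G A B x)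
    (hW : takenWindow G A x₀ = takenWindow G A (x₀ + q)) :
    ∀ x ≥ x₀, G (x + q) = G x + q := by
  have hstep : ∀ x ≥ x₀, takenWindow G A x = takenWindow G A (x + q) →
      G (x + q) = G x + q := fun x hx hWx =>
    (hset x hx).2.add_eq_of_takenWindow_eq hG (hY x) (hset x hx).1 (hset (x + q) (by omega)).2 hWx
  suffices ∀ x ≥ x₀, takenWindow G A x = takenWindow G A (x + q) from
    fun x hx => hstep x hx (this x hx)
  intro x hx
  induction x, hx using Nat.le_induction with
  | base => exact hW
  | succ x hx ih =>
    have hG' := hstep x hx ih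
    ext j
    rw [Nat.add_right_comm, mem_takenWindow_succ, mem_takenWindow_succ, ih, hG']
    exact or_congr_right (by omega)

end Settled

theorem mem_add_mul_iff_of_periodic {Y : ℕ → Finset ℤ} {p : ℕ}
    (hper : ∀ x, Y (x + p) = (Y x).image (· + (p : ℤ))) (k x : ℕ) (z : ℤ) :
    z ∈ Y x ↔ z + (k * p : ℕ) ∈ Y (x + k * p) := by
  induction k with
  | zero => simp
  | succ k ih =>
    rw [ih, show x + (k + 1) * p = x + k * p + p by ring, hper,
      show z + ((k + 1) * p : ℕ) = z + (k * p : ℕ) + p by push_cast; ring,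
      (add_left_injective (p : ℤ)).mem_finset_image]

theorem IsNimSequence.exists_period {Y : ℕ → Finset ℤ} {L : ℕ} {G : ℕ → ℕ} {A B p : ℕ}
    (hG : IsNimSequence Y L G) (hbij : Bijective G) (hp : 1 ≤ p)
    (hper : ∀ x, Y (x + p) = (Y x).image (· + (p : ℤ)))
    (hYlow : ∀ x, ∀ y ∈ Y x, (x : ℤ) < y + A) (hYup : ∀ x, ∀ y ∈ Y x, y < x + B) :
    ∃ P q : ℕ, 1 ≤ q ∧ q ≤ (A + B).choose A * p ∧ ∀ x ≥ P, G (x + q) = G x + q := by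
  obtain ⟨t, htL, hset⟩ := hG.exists_forall_ge_isSettled hbij hYlow hYup
  obtain ⟨r, r', hrr', hr', hW⟩ := exists_lt_le_card_eq_of_mapsTo
    (s := powersetCard A (range (A + B))) (fun r => takenWindow G A (t + r * p))
    fun r _ => mem_powersetCard.2
      ⟨(hset _ (by omega)).takenWindow_subset, (hset _ (by omega)).card_takenWindow hbij.1⟩
  rw [card_powersetCard, card_range] at hr'
  have ht' : t + r' * p = t + r * p + (r' - r) * p := by
    rw [add_assoc, ← add_mul, Nat.add_sub_cancel' hrr'.le]
  refine ⟨t + r * p, (r' - r) * p, Nat.mul_pos (by omega) hp,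
    Nat.mul_le_mul_right _ (by omega), hG.add_eq_of_takenWindow_eq
      (fun x z => mem_add_mul_iff_of_periodic hper _ x z)
      (fun x hx => ⟨by omega, hset x (by omega)⟩) (ht' ▸ hW)⟩

theorem pigeonhole_periodicity_general
    {F : Type*} [Fintype F] (f : ℕ → F)
    (Y : ℕ → Finset ℤ) (p : ℕ) (hp : 1 ≤ p)
    (hper : ∀ x : ℕ, Y (x + p) = (Y x).image (· + (p : ℤ)))
    (Mu Mo : ℤ)
    (hbound : ∀ x : ℕ, ∀ y ∈ Y x, Mu + 1 ≤ y - (x : ℤ) ∧ y - (x : ℤ) ≤ Mo - 1)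
    (L : ℕ) (G : ℕ → ℕ) (hbij : Function.Bijective G)
    (hG : ∀ x : ℕ, L ≤ x →
      G x = sInf {n : ℕ | (∀ x' < x, G x' ≠ n) ∧ (n : ℤ) ∉ Y x}) :
    (∃ r r' : ℕ, r < r' ∧ r' ≤ Fintype.card F ∧ f r = f r') ∧
    (∃ P q : ℕ, 1 ≤ q ∧
      q ≤ Nat.choose (Mu.natAbs + Mo.toNat) (min Mu.natAbs Mo.toNat) * p ∧
      ∀ x : ℕ, P ≤ x → G (x + q) = G x + q) := by
  refine ⟨by simpa using exists_lt_le_card_eq_of_mapsTo (s := univ) f fun r _ => mem_univ _, ?_⟩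
  obtain ⟨P, q, hq, hqp, hperiod⟩ :=
    IsNimSequence.exists_period (A := Mu.natAbs) (B := Mo.toNat) hG hbij hp hper
    (fun x y hy => by have := (hbound x y hy).1; omega)
    (fun x y hy => by have := (hbound x y hy).2; omega)
  refine ⟨P, q, hq, ?_, hperiod⟩
  rcases le_total Mu.natAbs Mo.toNat with h | h
  · rwa [min_eq_left h]
  · rwa [min_eq_right h, ← Nat.choose_symm_add]

/-- pigeonhole, and its consequence that a Nim sequence over an
additively periodic `(Y_x)` with difference bounds `Mu, Mo` is additively
periodic with period length at most `C(|Mu|+Mo, min(|Mu|,Mo)) · p`. -/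
theorem pigeonhole_periodicity
    {F : Type*} [Fintype F] (f : ℕ → F)
    (Y : ℕ → Finset ℤ) (p : ℕ) (hp : 1 ≤ p)
    (hper : ∀ x : ℕ, Y (x + p) = (Y x).image (· + (p : ℤ)))
    (Mu Mo : ℤ) (hMu : Mu < 0) (hMo : 0 < Mo)
    (hbound : ∀ x : ℕ, ∀ y ∈ Y x, Mu + 1 ≤ y - (x : ℤ) ∧ y - (x : ℤ) ≤ Mo - 1)
    (L : ℕ) (G : ℕ → ℕ) (hbij : Function.Bijective G)
    (hG : ∀ x : ℕ, L ≤ x →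
      G x = sInf {n : ℕ | (∀ x' < x, G x' ≠ n) ∧ (n : ℤ) ∉ Y x}) :
    (∃ r r' : ℕ, r < r' ∧ r' ≤ Fintype.card F ∧ f r = f r') ∧
    (∃ P q : ℕ, 1 ≤ q ∧
      q ≤ Nat.choose (Mu.natAbs + Mo.toNat) (min Mu.natAbs Mo.toNat) * p ∧
      ∀ x : ℕ, P ≤ x → G (x + q) = G x + q) :=
  pigeonhole_periodicity_general f Y p hp hper Mu Mo hbound L G hbij hG
end

section
/- With G(x) = x + Mo if (x mod M) < |Mu|, else G(x) = x + Mu (where Mu ≤ −1, Mo ≥ 1, M = |Mu| + Mo), G satisfies the greedy recursion G(x) = mex({G(x') : x' < x} ∪ ({x + Mu + 1, …, x + Mo − 1} ∩ ℕ)) for every x ∈ ℕ. -/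
/-- the explicit periodic permutation of Example 1 satisfies the
greedy mex recursion with `Y x = {Mu+1, …, Mo−1} + x`. -/
theorem periodic_example_greedy
    (Mu Mo : ℤ) (hMu : Mu ≤ -1) (hMo : 1 ≤ Mo)
    (M : ℕ) (hM : M = Mu.natAbs + Mo.toNat)
    (G : ℕ → ℕ)
    (hG : ∀ x : ℕ, (G x : ℤ) =
      if x % M < Mu.natAbs then (x : ℤ) + Mo else (x : ℤ) + Mu) :
    ∀ x : ℕ, G x = sInf {n : ℕ | (∀ x' < x, G x' ≠ n) ∧
      ¬((x : ℤ) + Mu < (n : ℤ) ∧ (n : ℤ) < (x : ℤ) + Mo)} := by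
  set a := Mu.natAbs with ha
  set b := Mo.toNat with hb
  have hMua : Mu = -(a : ℤ) := by omega
  have hMob : Mo = (b : ℤ) := (Int.toNat_of_nonneg (by omega)).symm
  have ha1 : 1 ≤ a := by omega
  have hb1 : 1 ≤ b := by omega
  have hMpos : 0 < M := by omega
  have hG1 : ∀ y : ℕ, y % M < a → G y = y + b := by
    intro y hy
    have := hG y
    rw [if_pos hy] at this
    omega
  have hG2 : ∀ y : ℕ, ¬ (y % M < a) → (G y : ℤ) = (y : ℤ) - a := by
    intro y hy
    have := hG y
    rw [if_neg hy] at this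
    omega
  have hmodlt : ∀ y : ℕ, y % M < M := fun y => Nat.mod_lt y hMpos
  -- preimage lemmas
  have pre1 : ∀ n : ℕ, n % M < b → G (n + a) = n := by
    intro n hn
    have h1 : (n + a) % M = n % M + a := by
      conv_lhs => rw [← Nat.div_add_mod n M, add_assoc, Nat.mul_add_mod]
      exact Nat.mod_eq_of_lt (by omega)
    have h2 : ¬ ((n + a) % M < a) := by omega
    have := hG2 (n + a) h2
    omega
  have pre2 : ∀ n : ℕ, b ≤ n % M → G (n - b) = n := by
    intro n hn
    have hbn : b ≤ n := le_trans hn (Nat.mod_le n M)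
    have hlt := hmodlt n
    have h0 := (Nat.div_add_mod n M).symm
    have h1 : (n - b) % M = n % M - b := by
      have hsub : n - b = M * (n / M) + (n % M - b) := by omega
      rw [hsub, Nat.mul_add_mod]
      exact Nat.mod_eq_of_lt (by omega)
    have h2 : (n - b) % M < a := by omega
    have := hG1 (n - b) h2
    omega
  intro x
  have hr := hmodlt x
  have mem : (∀ x' < x, G x' ≠ G x) ∧
      ¬((x : ℤ) + Mu < (G x : ℤ) ∧ (G x : ℤ) < (x : ℤ) + Mo) := by
    constructor
    · intro x' hx' heq
      by_cases h1 : x % M < a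
      · have hGx := hG1 x h1
        by_cases h2 : x' % M < a
        · have := hG1 x' h2; omega
        · have := hG2 x' h2; omega
      · have hGx := hG2 x h1
        by_cases h2 : x' % M < a
        · have hGx' := hG1 x' h2
          have hx'' : x = x' + M := by omega
          have : x % M = x' % M := by rw [hx'', Nat.add_mod_right]
          omega
        · have := hG2 x' h2; omega
    · by_cases h1 : x % M < a
      · have := hG1 x h1; omega
      · have := hG2 x h1; omega
  have nonmem : ∀ n : ℕ, n < G x → ¬ ((∀ x' < x, G x' ≠ n) ∧
      ¬((x : ℤ) + Mu < (n : ℤ) ∧ (n : ℤ) < (x : ℤ) + Mo)) := by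
    intro n hn hmem
    obtain ⟨h1, h2⟩ := hmem
    have hni : ¬ ((x : ℤ) - a < n ∧ (n : ℤ) < x + b) := by
      intro h; exact h2 ⟨by omega, by omega⟩
    by_cases hbr : x % M < a
    · have hGx := hG1 x hbr
      have hna : (n : ℤ) ≤ (x : ℤ) - a := by omega
      by_cases hs : n % M < b
      · -- show n + a < x (i.e. n ≠ x - a)
        have hne : n + a < x := by
          rcases Nat.lt_or_ge (n + a) x with h | h
          · exact h
          · exfalso
            have hxq := (Nat.div_add_mod x M).symm
            have hq : 1 ≤ x / M := by
              rcases Nat.eq_zero_or_pos (x / M) with h0 | h0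
              · rw [h0, Nat.mul_zero, Nat.zero_add] at hxq
                omega
              · exact h0
            obtain ⟨q', hq'⟩ : ∃ q', x / M = q' + 1 := ⟨x / M - 1, by omega⟩
            rw [hq', Nat.mul_add, Nat.mul_one] at hxq
            have hnval : n = M * q' + (b + x % M) := by omega
            have : n % M = b + x % M := by
              rw [hnval, Nat.mul_add_mod]
              exact Nat.mod_eq_of_lt (by omega)
            omega
        exact h1 (n + a) hne (pre1 n hs)
      · have hgn := pre2 n (by omega)
        have hbn : b ≤ n := le_trans (by omega) (Nat.mod_le n M)
        exact h1 (n - b) (by omega) hgn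
    · have hGx := hG2 x hbr
      have hax : a ≤ x := le_trans (by omega) (Nat.mod_le x M)
      have hna : (n : ℤ) < (x : ℤ) - a := by omega
      by_cases hs : n % M < b
      · exact h1 (n + a) (by omega) (pre1 n hs)
      · have hbn : b ≤ n := le_trans (by omega) (Nat.mod_le n M)
        exact h1 (n - b) (by omega) (pre2 n (by omega))
  have hne : (G x) ∈ {n : ℕ | (∀ x' < x, G x' ≠ n) ∧
      ¬((x : ℤ) + Mu < (n : ℤ) ∧ (n : ℤ) < (x : ℤ) + Mo)} := mem
  exact le_antisymm
    (le_of_not_gt fun hlt => nonmem _ hlt (Nat.sInf_mem ⟨_, hne⟩))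
    (Nat.sInf_le hne)
end

section
/- The Wythoff row G_1 defined by G_1(x) = mex({G_1(x') : x' < x} ∪ {G_0(x)} ∪ {G_0(x−1) : if x ≥ 1}), where G_0(y) = y, satisfies G_1(x + 3) = G_1(x) + 3 for all x ≥ 0, with difference period [+1, +1, −2]: G_1(x) = x+1 if x ≡ 0 or 1 (mod 3), and G_1(x) = x−2 if x ≡ 2 (mod 3). -/
def wythoffF (x : ℕ) : ℕ := if x % 3 = 2 then x - 2 else x + 1

lemma wythoff_row_one_key
    (G : ℕ → ℕ)
    (hG : ∀ x : ℕ, G x = sInf {n : ℕ | (∀ x' < x, G x' ≠ n) ∧ n ≠ x ∧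
      (1 ≤ x → n ≠ x - 1)}) :
    ∀ x : ℕ, G x = wythoffF x := by
  intro x
  induction x using Nat.strong_induction_on with
  | _ x ih =>
    rw [hG x]
    have hmem : wythoffF x ∈ {n : ℕ | (∀ x' < x, G x' ≠ n) ∧ n ≠ x ∧
        (1 ≤ x → n ≠ x - 1)} := by
      refine ⟨?_, ?_, ?_⟩
      · intro x' hx' h
        rw [ih x' hx'] at h
        unfold wythoffF at h
        split_ifs at h <;> omega
      · unfold wythoffF; split_ifs <;> omega
      · intro h1; unfold wythoffF; split_ifs <;> omega
    refine le_antisymm (Nat.sInf_le hmem) ?_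
    by_contra h
    push_neg at h
    obtain ⟨h1, h2, h3⟩ := Nat.sInf_mem ⟨_, hmem⟩
    set n := sInf {n : ℕ | (∀ x' < x, G x' ≠ n) ∧ n ≠ x ∧
        (1 ≤ x → n ≠ x - 1)} with hn
    rcases Nat.eq_zero_or_pos x with hx | hx
    · subst hx
      unfold wythoffF at h
      simp at h
      omega
    have h3' : n ≠ x - 1 := h3 hx
    set p := if n % 3 = 0 then n + 2 else n - 1 with hp
    have hpx : p < x := by
      unfold wythoffF at h
      split_ifs at h <;> split_ifs at hp <;> omega
    have hfp : wythoffF p = n := by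
      unfold wythoffF
      split_ifs at hp ⊢ <;> omega
    exact h1 p hpx (by rw [ih p hpx, hfp])

/-- the Wythoff row `G₁` is additively periodic with period 3 and
difference period `[+1, +1, −2]`. -/
theorem wythoff_row_one
    (G : ℕ → ℕ)
    (hG : ∀ x : ℕ, G x = sInf {n : ℕ | (∀ x' < x, G x' ≠ n) ∧ n ≠ x ∧
      (1 ≤ x → n ≠ x - 1)}) :
    (∀ x : ℕ, G (x + 3) = G x + 3) ∧
      (∀ x : ℕ, G x = if x % 3 = 2 then x - 2 else x + 1) := by
  have key := wythoff_row_one_key G hG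
  constructor
  · intro x
    rw [key, key]
    unfold wythoffF
    split_ifs <;> omega
  · intro x
    rw [key]
    rfl
end

section
/- The Wythoff row G_2 satisfies G_2(x+3) = G_2(x)+3 for all x, with values G_2(x) = x+2 if x ≡ 0 (mod 3) and G_2(x) = x−1 if x ≡ 1 or 2 (mod 3). -/
private def wf (m : ℕ) : ℕ := if m % 3 = 0 then m + 2 else m - 1

private lemma wf_spec (m : ℕ) :
    (m % 3 = 0 ∧ wf m = m + 2) ∨ (m % 3 ≠ 0 ∧ wf m = m - 1) := by
  unfold wf; split <;> simp_all

/-- the Wythoff row `G₂` is additively periodic with period 3 and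
difference period `[+2, −1, −1]`. -/
theorem wythoff_row_two
    (g₁ : ℕ → ℕ) (hg₁ : ∀ x : ℕ, g₁ x = if x % 3 = 2 then x - 2 else x + 1)
    (G : ℕ → ℕ)
    (hG : ∀ x : ℕ, G x = sInf {n : ℕ | (∀ x' < x, G x' ≠ n) ∧ n ≠ x ∧
      n ≠ g₁ x ∧ (1 ≤ x → n ≠ g₁ (x - 1)) ∧ (2 ≤ x → n ≠ x - 2)}) :
    (∀ x : ℕ, G (x + 3) = G x + 3) ∧
      (∀ x : ℕ, G x = if x % 3 = 0 then x + 2 else x - 1) := by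
  have key : ∀ x, G x = wf x := by
    intro x
    induction x using Nat.strong_induction_on with
    | _ x ih =>
    rw [hG x]
    have hmem : wf x ∈ {n : ℕ | (∀ x' < x, G x' ≠ n) ∧ n ≠ x ∧
        n ≠ g₁ x ∧ (1 ≤ x → n ≠ g₁ (x - 1)) ∧ (2 ≤ x → n ≠ x - 2)} := by
      refine ⟨?_, ?_, ?_, ?_, ?_⟩
      · intro x' hx'
        rw [ih x' hx']
        rcases wf_spec x' with ⟨h1, h2⟩ | ⟨h1, h2⟩ <;>
          rcases wf_spec x with ⟨h3, h4⟩ | ⟨h3, h4⟩ <;> omega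
      · rcases wf_spec x with ⟨h1, h2⟩ | ⟨h1, h2⟩ <;> omega
      · rw [hg₁ x]
        rcases wf_spec x with ⟨h1, h2⟩ | ⟨h1, h2⟩ <;> split_ifs <;> omega
      · intro hx
        rw [hg₁ (x - 1)]
        rcases wf_spec x with ⟨h1, h2⟩ | ⟨h1, h2⟩ <;> split_ifs <;> omega
      · intro hx
        rcases wf_spec x with ⟨h1, h2⟩ | ⟨h1, h2⟩ <;> omega
    refine le_antisymm (Nat.sInf_le hmem) (le_csInf ⟨_, hmem⟩ ?_)
    intro m hm
    by_contra hlt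
    push_neg at hlt
    obtain ⟨h1, h2, h3, h4, h5⟩ := hm
    rw [hg₁ x] at h3
    have hcov : ∃ y < x, wf y = m := by
      refine ⟨if m % 3 = 2 then m - 2 else m + 1, ?_, ?_⟩
      · rcases wf_spec x with ⟨a, b⟩ | ⟨a, b⟩ <;> split_ifs at h3 ⊢ <;> omega
      · split_ifs with hm2
        · rcases wf_spec (m - 2) with ⟨a, b⟩ | ⟨a, b⟩ <;> omega
        · rcases wf_spec (m + 1) with ⟨a, b⟩ | ⟨a, b⟩ <;> omega
    obtain ⟨y, hy, hwy⟩ := hcov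
    exact h1 y hy (by rw [ih y hy, hwy])
  constructor
  · intro x
    rw [key, key]
    rcases wf_spec x with ⟨h1, h2⟩ | ⟨h1, h2⟩ <;>
      rcases wf_spec (x + 3) with ⟨h3, h4⟩ | ⟨h3, h4⟩ <;> omega
  · intro x
    rw [key x]; rfl
end

section
/- Landman's recursion localization: Let G : ℕ → ℕ be a bijective Nim sequence over additively periodic (Y_x) with difference bounds Mu < 0 < Mo, M = |Mu| + Mo, and suppose Mu ≤ G(x') − x' ≤ Mo for all x' ≥ C. Then for all sufficiently large x, {G(x') : x' < x − M} ⊆ {0, 1, …, x − 1 + Mu} ⊆ {G(x') : x' < x}, and hence G(x) = mex({0,…,x−1+Mu} ∪ ({G(x') : x − M ≤ x' < x} ∩ {x+Mu, …, x+Mo−1}) ∪ (Y_x ∩ ℕ)). -/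
/-- Landman's localization: for large `x`, the values below
`x + Mu` are exactly those taken before `x`, and the mex recursion localizes to
a window of `M` previous values. -/
theorem landman_localization
    (Y : ℕ → Finset ℤ) (p : ℕ) (hp : 1 ≤ p)
    (hper : ∀ x : ℕ, Y (x + p) = (Y x).image (· + (p : ℤ)))
    (Mu Mo : ℤ) (hMu : Mu < 0) (hMo : 0 < Mo)
    (M : ℕ) (hM : M = Mu.natAbs + Mo.toNat)
    (L : ℕ) (G : ℕ → ℕ) (hbij : Function.Bijective G)
    (hG : ∀ x : ℕ, L ≤ x →
      G x = sInf {n : ℕ | (∀ x' < x, G x' ≠ n) ∧ (n : ℤ) ∉ Y x})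
    (C : ℕ)
    (hbound : ∀ x : ℕ, C ≤ x →
      Mu ≤ (G x : ℤ) - (x : ℤ) ∧ (G x : ℤ) - (x : ℤ) ≤ Mo) :
    ∃ N : ℕ, ∀ x : ℕ, N ≤ x →
      ({m : ℕ | ∃ x' < x - M, G x' = m} ⊆
          {m : ℕ | (m : ℤ) ≤ (x : ℤ) - 1 + Mu}) ∧
      ({m : ℕ | (m : ℤ) ≤ (x : ℤ) - 1 + Mu} ⊆ {m : ℕ | ∃ x' < x, G x' = m}) ∧
      G x = sInf {n : ℕ |
        ¬((n : ℤ) ≤ (x : ℤ) - 1 + Mu) ∧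
        ¬(∃ x' : ℕ, x - M ≤ x' ∧ x' < x ∧ G x' = n ∧
            (x : ℤ) + Mu ≤ (n : ℤ) ∧ (n : ℤ) ≤ (x : ℤ) + Mo - 1) ∧
        (n : ℤ) ∉ Y x} := by
  classical
  set B := (Finset.range C).sup G with hB
  refine ⟨max (max L (C + M)) (B + Mu.natAbs + M + 1), ?_⟩
  intro x hx
  have hxL : L ≤ x := le_trans (le_trans (le_max_left _ _) (le_max_left _ _)) hx
  have hxCM : C + M ≤ x := le_trans (le_trans (le_max_right _ _) (le_max_left _ _)) hx
  have hxB : B + Mu.natAbs + M + 1 ≤ x := le_trans (le_max_right _ _) hx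
  have hMx : M ≤ x := le_trans (Nat.le_add_left _ _) hxCM
  have hCx : C ≤ x - M := by omega
  have hcastM : ((x - M : ℕ) : ℤ) = (x : ℤ) - M := by
    push_cast [hMx]; ring
  have hMuAbs : ((Mu.natAbs : ℤ)) = -Mu := Int.ofNat_natAbs_of_nonpos hMu.le
  have hMint : (M : ℤ) = -Mu + Mo := by
    rw [hM]; push_cast [hMuAbs, Int.toNat_of_nonneg hMo.le]
    omega
  -- Part 1
  have h1 : ∀ m : ℕ, (∃ x' < x - M, G x' = m) → (m : ℤ) ≤ (x : ℤ) - 1 + Mu := by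
    rintro m ⟨x', hx', rfl⟩
    rcases lt_or_ge x' C with hc | hc
    · have hGB : G x' ≤ B := Finset.le_sup (Finset.mem_range.mpr hc)
      have : (B : ℤ) + Mu.natAbs + M + 1 ≤ x := by exact_mod_cast hxB
      have hGB' : (G x' : ℤ) ≤ B := by exact_mod_cast hGB
      have hM0 : (0:ℤ) ≤ M := Int.natCast_nonneg M
      linarith [hMuAbs]
    · have hb := (hbound x' hc).2
      have hx'' : (x' : ℤ) < (x : ℤ) - M := by
        have : (x' : ℤ) < ((x - M : ℕ) : ℤ) := by exact_mod_cast hx'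
        linarith [hcastM ▸ this]
      linarith [hb, hMint]
  -- Part 2
  have h2 : ∀ m : ℕ, (m : ℤ) ≤ (x : ℤ) - 1 + Mu → ∃ x' < x, G x' = m := by
    intro m hm
    obtain ⟨x'', rfl⟩ := hbij.2 m
    refine ⟨x'', ?_, rfl⟩
    rcases lt_or_ge x'' C with hc | hc
    · omega
    · have hb := (hbound x'' hc).1
      have : (x'' : ℤ) < (x : ℤ) := by linarith
      exact_mod_cast this
  refine ⟨fun m hm => h1 m hm, fun m hm => h2 m hm, ?_⟩
  have hset : {n : ℕ | (∀ x' < x, G x' ≠ n) ∧ (n : ℤ) ∉ Y x} =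
      {n : ℕ |
        ¬((n : ℤ) ≤ (x : ℤ) - 1 + Mu) ∧
        ¬(∃ x' : ℕ, x - M ≤ x' ∧ x' < x ∧ G x' = n ∧
            (x : ℤ) + Mu ≤ (n : ℤ) ∧ (n : ℤ) ≤ (x : ℤ) + Mo - 1) ∧
        (n : ℤ) ∉ Y x} := by
    ext n
    simp only [Set.mem_setOf_eq]
    constructor
    · rintro ⟨hall, hY⟩
      refine ⟨?_, ?_, hY⟩
      · intro hle
        obtain ⟨x', hx', he⟩ := h2 n hle
        exact hall x' hx' he
      · rintro ⟨x', _, hx', he, _, _⟩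
        exact hall x' hx' he
    · rintro ⟨hn1, hn2, hY⟩
      refine ⟨?_, hY⟩
      intro x' hx' he
      rcases lt_or_ge x' (x - M) with hw | hw
      · exact hn1 (h1 n ⟨x', hw, he⟩)
      · have hc : C ≤ x' := le_trans hCx hw
        have hb := (hbound x' hc).2
        have hxi : (x' : ℤ) < (x : ℤ) := by exact_mod_cast hx'
        have hub : (n : ℤ) ≤ (x : ℤ) + Mo - 1 := by
          have : (n : ℤ) = G x' := by exact_mod_cast he.symm
          linarith
        have hlb : (x : ℤ) + Mu ≤ n := by
          push_neg at hn1; linarith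
        exact hn2 ⟨x', hw, hx', he, hlb, hub⟩
  rw [hG x hxL, hset]
end
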